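/- arXiv:1209.2185 — 2 statements merged into one kernel-verified Lean document; each statement's English description precedes it below -/
import Mathlib

section
/- Let A ∈ ℝ^{m×n}, B ∈ ℝ^{m×ℓ}, C = [A ; B] (column concatenation) of rank ω with compact SVD factor U_C ∈ ℝ^{m×ω}. Suppose S ∈ ℝ^{r×m} satisfies √(1−ε) ≤ σ_ω(S U_C) ≤ σ_1(S U_C) ≤ √(1+ε) for some 0 < ε < 1. Then for every i ≤ min(n,ℓ): |σ_i(A^T B) − σ_i(A^T S^T S B)| ≤ ε · ‖A‖₂ · ‖B‖₂. -/
open Matrix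

noncomputable def svals {p q : ℕ} (X : Matrix (Fin p) (Fin q) ℝ) : Fin q → ℝ :=
  fun i => Real.sqrt ((show (Xᵀ * X).IsHermitian by simpa using Matrix.isHermitian_conjTranspose_mul_self X).eigenvalues
    (Tuple.sort ((show (Xᵀ * X).IsHermitian by simpa using Matrix.isHermitian_conjTranspose_mul_self X).eigenvalues) i.rev))

noncomputable def sNorm {p q : ℕ} (X : Matrix (Fin p) (Fin q) ℝ) : ℝ :=
  ⨆ i, svals X i

/-!
The columns of `A` and `B` lie in the range of `UC` and `UCᵀ UC = 1`, so `A = UC M` and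
`B = UC N`, whence `AᵀB - AᵀSᵀSB = Mᵀ (1 - (S UC)ᵀ (S UC)) N`. The eigenvalues of
`(S UC)ᵀ (S UC)` are the squared singular values of `S UC`, which lie in `[1 - ε, 1 + ε]`, so the
middle factor has spectral norm at most `ε`, while `‖M‖ ≤ ‖A‖` and `‖N‖ ≤ ‖B‖` because `UC` is an
isometry. Weyl's bound `|σᵢ(X) - σᵢ(Y)| ≤ ‖X - Y‖` concludes; it comes from the Courant–Fischer
dimension count: the span of the eigenvectors of `XᵀX` for its `i + 1` largest eigenvalues and the
span of those of `YᵀY` for its `q - i` smallest ones share a nonzero vector `x`, and on it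
`σᵢ(X) ‖x‖ ≤ ‖X x‖ ≤ ‖Y x‖ + ‖X - Y‖ ‖x‖ ≤ (σᵢ(Y) + ‖X - Y‖) ‖x‖`.
-/

open scoped Matrix.Norms.L2Operator RealInnerProductSpace
open WithLp

theorem OrthonormalBasis.inner_eq_zero_of_mem_span_image {ι E : Type*} [Fintype ι]
    [NormedAddCommGroup E] [InnerProductSpace ℝ E] (v : OrthonormalBasis ι ℝ E) {S : Set ι}
    {x : E} (hx : x ∈ Submodule.span ℝ (v '' S)) {j : ι} (hj : j ∉ S) : ⟪v j, x⟫ = 0 := by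
  have hle : Submodule.span ℝ (v '' S) ≤ (ℝ ∙ v j)ᗮ := by
    rw [Submodule.span_le]
    rintro _ ⟨k, hk, rfl⟩
    exact (Submodule.mem_orthogonal_singleton_iff_inner_right).mpr
      (v.orthonormal.2 fun hjk => hj (hjk ▸ hk))
  exact Submodule.mem_orthogonal_singleton_iff_inner_right.mp (hle hx)

theorem OrthonormalBasis.finrank_span_image {ι E : Type*} [Fintype ι]
    [NormedAddCommGroup E] [InnerProductSpace ℝ E] (v : OrthonormalBasis ι ℝ E) (S : Finset ι) :
    Module.finrank ℝ (Submodule.span ℝ (v '' S)) = S.card := by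
  have hli : LinearIndependent ℝ fun k : (S : Set ι) => v k :=
    v.orthonormal.linearIndependent.comp _ Subtype.val_injective
  rw [Set.image_eq_range, finrank_span_eq_card hli]
  simp

namespace Matrix

theorem IsHermitian.l2_opNorm_smul_one_sub_le {n : Type*} [Fintype n] [DecidableEq n]
    {H : Matrix n n ℝ} (hH : H.IsHermitian) {c r : ℝ} (hr : 0 ≤ r)
    (h : ∀ j, |c - hH.eigenvalues j| ≤ r) : ‖c • (1 : Matrix n n ℝ) - H‖ ≤ r := by
  set U := hH.eigenvectorUnitary
  have hdiag : c • (1 : Matrix n n ℝ) - H =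
      U * diagonal (fun j => c - hH.eigenvalues j) * (star U : unitary _) := by
    conv_lhs => rw [hH.spectral_theorem]
    have hD : diagonal (fun j => c - hH.eigenvalues j) =
        c • 1 - diagonal (RCLike.ofReal ∘ hH.eigenvalues) := by
      ext i j; by_cases hij : i = j <;> simp [hij]
    rw [hD, Unitary.conjStarAlgAut_apply, mul_sub, sub_mul, mul_smul_comm, smul_mul_assoc, mul_one,
      Unitary.coe_star, Unitary.mul_star_self_of_mem U.2]
  rw [hdiag, CStarRing.norm_mul_coe_unitary, CStarRing.norm_coe_unitary_mul, l2_opNorm_diagonal]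
  exact pi_norm_le_iff_of_nonneg hr |>.mpr fun j => (Real.norm_eq_abs _).trans_le (h j)

theorem exists_eq_mul_of_range_mulVecLin_le {R m n k : Type*} [CommSemiring R] [Fintype n]
    [Fintype k] {A : Matrix m k R} {U : Matrix m n R}
    (h : LinearMap.range A.mulVecLin ≤ LinearMap.range U.mulVecLin) :
    ∃ M : Matrix n k R, A = U * M := by
  rw [range_mulVecLin, Submodule.span_le] at h
  choose w hw using fun j => h ⟨j, rfl⟩
  refine ⟨(of w)ᵀ, Matrix.ext fun i j => ?_⟩
  simpa [mul_apply, mulVec, dotProduct] using (congrFun (hw j) i).symm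

theorem range_mulVecLin_le_fromCols_left {R m n k : Type*} [CommSemiring R] [Fintype n]
    [Fintype k] (A : Matrix m n R) (B : Matrix m k R) :
    LinearMap.range A.mulVecLin ≤ LinearMap.range (fromCols A B).mulVecLin := by
  rw [range_mulVecLin, range_mulVecLin]
  exact Submodule.span_mono fun _ ⟨j, hj⟩ => ⟨Sum.inl j, by rw [← hj]; rfl⟩

theorem range_mulVecLin_le_fromCols_right {R m n k : Type*} [CommSemiring R] [Fintype n]
    [Fintype k] (A : Matrix m n R) (B : Matrix m k R) :
    LinearMap.range B.mulVecLin ≤ LinearMap.range (fromCols A B).mulVecLin := by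
  rw [range_mulVecLin, range_mulVecLin]
  exact Submodule.span_mono fun _ ⟨j, hj⟩ => ⟨Sum.inr j, by rw [← hj]; rfl⟩

theorem l2_opNorm_transpose {m n : Type*} [Fintype m] [Fintype n] [DecidableEq m]
    [DecidableEq n] (M : Matrix m n ℝ) : ‖Mᵀ‖ = ‖M‖ := by
  rw [← conjTranspose_eq_transpose_of_trivial, l2_opNorm_conjTranspose]

theorem l2_opNorm_le_l2_opNorm_mul_of_transpose_mul_self_eq_one {m n k : Type*} [Fintype m]
    [Fintype n] [Fintype k] [DecidableEq m] [DecidableEq n] [DecidableEq k] {U : Matrix m n ℝ}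
    (hU : Uᵀ * U = 1) (M : Matrix n k ℝ) :
    ‖M‖ ≤ ‖U * M‖ := by
  have hU1 : ‖U‖ ≤ 1 := by
    have h := l2_opNorm_conjTranspose_mul_self U
    rw [conjTranspose_eq_transpose_of_trivial, hU, ← diagonal_one, l2_opNorm_diagonal] at h
    have h1 : ‖fun _ : n => (1 : ℝ)‖ ≤ 1 :=
      (pi_norm_le_iff_of_nonneg zero_le_one).mpr fun _ => by simp
    nlinarith [norm_nonneg U]
  calc ‖M‖ = ‖Uᵀ * (U * M)‖ := by rw [← Matrix.mul_assoc, hU, Matrix.one_mul]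
    _ ≤ ‖Uᵀ‖ * ‖U * M‖ := l2_opNorm_mul _ _
    _ ≤ ‖U * M‖ := by
      rw [l2_opNorm_transpose]
      exact mul_le_of_le_one_left (norm_nonneg _) hU1

theorem isHermitian_transpose_mul_self {m n : Type*} [Fintype m] (X : Matrix m n ℝ) :
    (Xᵀ * X).IsHermitian := by
  simpa using isHermitian_conjTranspose_mul_self X

section GramMatrix

variable {m n : Type*} [Fintype m] [Fintype n] [DecidableEq n] (X : Matrix m n ℝ)

theorem norm_toLp_mulVec_sq (x : EuclideanSpace ℝ n) :
    ‖toLp 2 (X *ᵥ x)‖ ^ 2 = ⟪x, toEuclideanCLM (𝕜 := ℝ) (Xᵀ * X) x⟫ := by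
  rw [← real_inner_self_eq_norm_sq, inner_toEuclideanCLM, ← mulVec_mulVec, dotProduct_mulVec,
    vecMul_transpose, EuclideanSpace.inner_eq_star_dotProduct]
  simp

theorem norm_toLp_mulVec_sq_sub_mul_norm_sq (c : ℝ) (x : EuclideanSpace ℝ n) :
    ‖toLp 2 (X *ᵥ x)‖ ^ 2 - c * ‖x‖ ^ 2 =
      ∑ j, ((isHermitian_transpose_mul_self X).eigenvalues j - c) *
        ⟪(isHermitian_transpose_mul_self X).eigenvectorBasis j, x⟫ ^ 2 := by
  set hX := isHermitian_transpose_mul_self X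
  set v := hX.eigenvectorBasis
  set T := toEuclideanCLM (𝕜 := ℝ) (Xᵀ * X)
  have hTv : ∀ j, T (v j) = hX.eigenvalues j • v j := fun j => by
    ext1 i; exact congrFun (hX.mulVec_eigenvectorBasis j) i
  have hquad : ⟪x, T x⟫ = ∑ j, hX.eigenvalues j * ⟪v j, x⟫ ^ 2 := by
    rw [← v.sum_inner_mul_inner]
    refine Finset.sum_congr rfl fun j _ => ?_
    have hsymm : ⟪v j, T x⟫ = ⟪T (v j), x⟫ :=
      (isSymmetric_toEuclideanLin_iff.mpr hX (v j) x).symm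
    rw [hsymm, hTv, real_inner_smul_left, real_inner_comm x]
    ring
  rw [norm_toLp_mulVec_sq, hquad, ← v.sum_sq_inner_right, Finset.mul_sum,
    ← Finset.sum_sub_distrib]
  exact Finset.sum_congr rfl fun j _ => by ring

theorem mul_norm_sq_le_norm_toLp_mulVec_sq {S : Set n} {c : ℝ}
    (hc : ∀ j ∈ S, c ≤ (isHermitian_transpose_mul_self X).eigenvalues j)
    {x : EuclideanSpace ℝ n}
    (hx : x ∈ Submodule.span ℝ ((isHermitian_transpose_mul_self X).eigenvectorBasis '' S)) :
    c * ‖x‖ ^ 2 ≤ ‖toLp 2 (X *ᵥ x)‖ ^ 2 := by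
  rw [← sub_nonneg, norm_toLp_mulVec_sq_sub_mul_norm_sq]
  refine Finset.sum_nonneg fun j _ => ?_
  by_cases hj : j ∈ S
  · exact mul_nonneg (sub_nonneg.2 (hc j hj)) (sq_nonneg _)
  · simp [OrthonormalBasis.inner_eq_zero_of_mem_span_image _ hx hj]

theorem norm_toLp_mulVec_sq_le_mul_norm_sq {S : Set n} {c : ℝ}
    (hc : ∀ j ∈ S, (isHermitian_transpose_mul_self X).eigenvalues j ≤ c)
    {x : EuclideanSpace ℝ n}
    (hx : x ∈ Submodule.span ℝ ((isHermitian_transpose_mul_self X).eigenvectorBasis '' S)) :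
    ‖toLp 2 (X *ᵥ x)‖ ^ 2 ≤ c * ‖x‖ ^ 2 := by
  rw [← sub_nonpos, norm_toLp_mulVec_sq_sub_mul_norm_sq]
  refine Finset.sum_nonpos fun j _ => ?_
  by_cases hj : j ∈ S
  · exact mul_nonpos_of_nonpos_of_nonneg (sub_nonpos.2 (hc j hj)) (sq_nonneg _)
  · simp [OrthonormalBasis.inner_eq_zero_of_mem_span_image _ hx hj]

end GramMatrix

section SingularValues

variable {p q : ℕ} (X : Matrix (Fin p) (Fin q) ℝ)

theorem exists_svals_eq_sqrt_eigenvalues (j : Fin q) :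
    ∃ k, svals X k = √((isHermitian_transpose_mul_self X).eigenvalues j) :=
  ⟨((Tuple.sort (isHermitian_transpose_mul_self X).eigenvalues).symm j).rev, by
    simp only [svals, Fin.rev_rev, Equiv.apply_symm_apply]⟩

theorem eigenvalues_transpose_mul_self_nonneg (j : Fin q) :
    0 ≤ (isHermitian_transpose_mul_self X).eigenvalues j :=
  eigenvalues_conjTranspose_mul_self_nonneg X j

theorem svals_nonneg (i : Fin q) : 0 ≤ svals X i :=
  Real.sqrt_nonneg _

theorem svals_sq (i : Fin q) :
    svals X i ^ 2 = (isHermitian_transpose_mul_self X).eigenvalues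
      (Tuple.sort (isHermitian_transpose_mul_self X).eigenvalues i.rev) :=
  Real.sq_sqrt (eigenvalues_transpose_mul_self_nonneg X _)

theorem exists_finrank_eq_forall_svals_mul_norm_le (i : Fin q) :
    ∃ V : Submodule ℝ (EuclideanSpace ℝ (Fin q)), Module.finrank ℝ V = i + 1 ∧
      ∀ x ∈ V, svals X i * ‖x‖ ≤ ‖toLp 2 (X *ᵥ x)‖ := by
  set hX := isHermitian_transpose_mul_self X
  set σ := Tuple.sort hX.eigenvalues
  -- `σ` lists the eigenvalues in increasing order, so `σ '' Ici i.rev` indexes the `i + 1` largest.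
  refine ⟨Submodule.span ℝ (hX.eigenvectorBasis '' ((Finset.Ici i.rev).image σ)), ?_,
    fun x hx => ?_⟩
  · rw [OrthonormalBasis.finrank_span_image, Finset.card_image_of_injective _ σ.injective,
      Fin.card_Ici, Fin.val_rev]
    omega
  · have hc : ∀ j ∈ ((Finset.Ici i.rev).image σ : Set (Fin q)),
        svals X i ^ 2 ≤ hX.eigenvalues j := by
      intro j hj
      obtain ⟨k, hk, rfl⟩ := Finset.mem_image.mp hj
      rw [svals_sq]
      exact Tuple.monotone_sort hX.eigenvalues (Finset.mem_Ici.mp hk)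
    rw [← pow_le_pow_iff_left₀ (mul_nonneg (svals_nonneg X i) (norm_nonneg _)) (norm_nonneg _)
      two_ne_zero, mul_pow]
    exact mul_norm_sq_le_norm_toLp_mulVec_sq X hc hx

theorem exists_finrank_add_eq_forall_norm_le_svals_mul (i : Fin q) :
    ∃ W : Submodule ℝ (EuclideanSpace ℝ (Fin q)), Module.finrank ℝ W + i = q ∧
      ∀ x ∈ W, ‖toLp 2 (X *ᵥ x)‖ ≤ svals X i * ‖x‖ := by
  set hX := isHermitian_transpose_mul_self X
  set σ := Tuple.sort hX.eigenvalues
  refine ⟨Submodule.span ℝ (hX.eigenvectorBasis '' ((Finset.Iic i.rev).image σ)), ?_,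
    fun x hx => ?_⟩
  · rw [OrthonormalBasis.finrank_span_image, Finset.card_image_of_injective _ σ.injective,
      Fin.card_Iic, Fin.val_rev]
    omega
  · have hc : ∀ j ∈ ((Finset.Iic i.rev).image σ : Set (Fin q)),
        hX.eigenvalues j ≤ svals X i ^ 2 := by
      intro j hj
      obtain ⟨k, hk, rfl⟩ := Finset.mem_image.mp hj
      rw [svals_sq]
      exact Tuple.monotone_sort hX.eigenvalues (Finset.mem_Iic.mp hk)
    rw [← pow_le_pow_iff_left₀ (norm_nonneg _) (mul_nonneg (svals_nonneg X i) (norm_nonneg _))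
      two_ne_zero, mul_pow]
    exact norm_toLp_mulVec_sq_le_mul_norm_sq X hc hx

end SingularValues

theorem svals_le_svals_add_l2_opNorm_sub {p q : ℕ} (X Y : Matrix (Fin p) (Fin q) ℝ)
    (i : Fin q) :
    svals X i ≤ svals Y i + ‖X - Y‖ := by
  obtain ⟨V, hV, hXV⟩ := exists_finrank_eq_forall_svals_mul_norm_le X i
  obtain ⟨W, hW, hYW⟩ := exists_finrank_add_eq_forall_norm_le_svals_mul Y i
  have hVW : ¬Disjoint V W := fun h => by
    have := Submodule.finrank_add_finrank_le_of_disjoint h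
    rw [finrank_euclideanSpace_fin] at this
    omega
  obtain ⟨x, hxV, hxW, hx0⟩ : ∃ x ∈ V, x ∈ W ∧ x ≠ 0 := by
    simpa [Submodule.disjoint_def] using hVW
  have hsplit : toLp 2 (X *ᵥ x) = toLp 2 (Y *ᵥ x) + toLp 2 ((X - Y) *ᵥ x) := by
    rw [← toLp_add, sub_mulVec, add_sub_cancel]
  have key : svals X i * ‖x‖ ≤ (svals Y i + ‖X - Y‖) * ‖x‖ := calc
    svals X i * ‖x‖ ≤ ‖toLp 2 (X *ᵥ x)‖ := hXV x hxV
    _ ≤ ‖toLp 2 (Y *ᵥ x)‖ + ‖toLp 2 ((X - Y) *ᵥ x)‖ := hsplit ▸ norm_add_le _ _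
    _ ≤ svals Y i * ‖x‖ + ‖X - Y‖ * ‖x‖ := add_le_add (hYW x hxW) (l2_opNorm_mulVec _ x)
    _ = (svals Y i + ‖X - Y‖) * ‖x‖ := by ring
  exact le_of_mul_le_mul_right key (norm_pos_iff.mpr hx0)

theorem abs_svals_sub_svals_le {p q : ℕ} (X Y : Matrix (Fin p) (Fin q) ℝ) (i : Fin q) :
    |svals X i - svals Y i| ≤ ‖X - Y‖ := by
  have hXY := svals_le_svals_add_l2_opNorm_sub X Y i
  have hYX := svals_le_svals_add_l2_opNorm_sub Y X i
  rw [norm_sub_rev] at hYX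
  exact abs_sub_le_iff.mpr ⟨by linarith, by linarith⟩

theorem sNorm_nonneg {p q : ℕ} (X : Matrix (Fin p) (Fin q) ℝ) : 0 ≤ sNorm X :=
  Real.iSup_nonneg (svals_nonneg X)

theorem l2_opNorm_le_sNorm {p q : ℕ} (X : Matrix (Fin p) (Fin q) ℝ) : ‖X‖ ≤ sNorm X := by
  have hs := sNorm_nonneg X
  have hH : ‖(0 : ℝ) • (1 : Matrix (Fin q) (Fin q) ℝ) - Xᵀ * X‖ ≤ sNorm X ^ 2 := by
    refine (isHermitian_transpose_mul_self X).l2_opNorm_smul_one_sub_le (by positivity) fun j => ?_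
    obtain ⟨k, hk⟩ := exists_svals_eq_sqrt_eigenvalues X j
    have hμ := eigenvalues_transpose_mul_self_nonneg X j
    have hk' : svals X k ≤ sNorm X := le_ciSup (Set.finite_range _).bddAbove k
    rw [zero_sub, abs_neg, abs_of_nonneg hμ, ← Real.sq_sqrt hμ, ← hk]
    exact pow_le_pow_left₀ (svals_nonneg X k) hk' 2
  rw [zero_smul, zero_sub, norm_neg, ← conjTranspose_eq_transpose_of_trivial,
    l2_opNorm_conjTranspose_mul_self] at hH
  nlinarith [norm_nonneg X]

theorem l2_opNorm_one_sub_transpose_mul_self_le {p q : ℕ} (X : Matrix (Fin p) (Fin q) ℝ)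
    {ε : ℝ} (hε : 0 ≤ ε) (h : ∀ i, √(1 - ε) ≤ svals X i ∧ svals X i ≤ √(1 + ε)) :
    ‖1 - Xᵀ * X‖ ≤ ε := by
  rw [← one_smul ℝ (1 : Matrix (Fin q) (Fin q) ℝ)]
  refine (isHermitian_transpose_mul_self X).l2_opNorm_smul_one_sub_le hε fun j => ?_
  obtain ⟨k, hk⟩ := exists_svals_eq_sqrt_eigenvalues X j
  have hμ := eigenvalues_transpose_mul_self_nonneg X j
  obtain ⟨hlo, hhi⟩ := h k
  rw [hk] at hlo hhi
  rw [Real.sqrt_le_sqrt_iff hμ] at hlo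
  rw [Real.sqrt_le_sqrt_iff (by linarith)] at hhi
  exact abs_sub_le_iff.mpr ⟨by linarith, by linarith⟩

end Matrix

theorem stmt8_general {m n ℓ ω r : ℕ}
    (A : Matrix (Fin m) (Fin n) ℝ) (B : Matrix (Fin m) (Fin ℓ) ℝ)
    (UC : Matrix (Fin m) (Fin ω) ℝ) (S : Matrix (Fin r) (Fin m) ℝ)
    (hUC : UCᵀ * UC = 1)
    (hrC : LinearMap.range UC.mulVecLin = LinearMap.range (Matrix.fromCols A B).mulVecLin)
    (ε : ℝ) (hε0 : 0 < ε)
    (hsv : ∀ i, Real.sqrt (1 - ε) ≤ svals (S * UC) i ∧ svals (S * UC) i ≤ Real.sqrt (1 + ε))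
    (i : Fin ℓ) :
    |svals (Aᵀ * B) i - svals (Aᵀ * Sᵀ * S * B) i| ≤ ε * sNorm A * sNorm B := by
  obtain ⟨M, rfl⟩ := exists_eq_mul_of_range_mulVecLin_le
    ((range_mulVecLin_le_fromCols_left A B).trans hrC.ge)
  obtain ⟨N, rfl⟩ := exists_eq_mul_of_range_mulVecLin_le
    ((range_mulVecLin_le_fromCols_right _ B).trans hrC.ge)
  set E := 1 - (S * UC)ᵀ * (S * UC)
  have hdiff : (UC * M)ᵀ * (UC * N) - (UC * M)ᵀ * Sᵀ * S * (UC * N) = Mᵀ * E * N := by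
    simp only [E, transpose_mul, Matrix.mul_sub, Matrix.sub_mul, Matrix.mul_one, Matrix.mul_assoc]
    rw [← Matrix.mul_assoc UCᵀ UC N, hUC, Matrix.one_mul]
  have hE : ‖E‖ ≤ ε := l2_opNorm_one_sub_transpose_mul_self_le _ hε0.le hsv
  have hM : ‖Mᵀ‖ ≤ sNorm (UC * M) := by
    rw [l2_opNorm_transpose]
    exact (l2_opNorm_le_l2_opNorm_mul_of_transpose_mul_self_eq_one hUC M).trans
      (l2_opNorm_le_sNorm _)
  have hN : ‖N‖ ≤ sNorm (UC * N) :=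
    (l2_opNorm_le_l2_opNorm_mul_of_transpose_mul_self_eq_one hUC N).trans (l2_opNorm_le_sNorm _)
  calc _ ≤ ‖Mᵀ * E * N‖ := hdiff ▸ abs_svals_sub_svals_le _ _ i
    _ ≤ ‖Mᵀ‖ * ‖E‖ * ‖N‖ := (l2_opNorm_mul _ _).trans (by gcongr; exact l2_opNorm_mul _ _)
    _ ≤ sNorm (UC * M) * ε * sNorm (UC * N) :=
      mul_le_mul (mul_le_mul hM hE (norm_nonneg _) (sNorm_nonneg _)) hN (norm_nonneg _)
        (mul_nonneg (sNorm_nonneg _) hε0.le)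
    _ = ε * sNorm (UC * M) * sNorm (UC * N) := by ring

theorem stmt8 {m n ℓ ω r : ℕ}
    (A : Matrix (Fin m) (Fin n) ℝ) (B : Matrix (Fin m) (Fin ℓ) ℝ)
    (UC : Matrix (Fin m) (Fin ω) ℝ) (S : Matrix (Fin r) (Fin m) ℝ)
    (hω : ω = (Matrix.fromCols A B).rank)
    (hUC : UCᵀ * UC = 1)
    (hrC : LinearMap.range UC.mulVecLin = LinearMap.range (Matrix.fromCols A B).mulVecLin)
    (ε : ℝ) (hε0 : 0 < ε) (hε1 : ε < 1)
    (hsv : ∀ i, Real.sqrt (1 - ε) ≤ svals (S * UC) i ∧ svals (S * UC) i ≤ Real.sqrt (1 + ε))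
    (i : Fin ℓ) (hi : (i : ℕ) < min n ℓ) :
    |svals (Aᵀ * B) i - svals (Aᵀ * Sᵀ * S * B) i| ≤ ε * sNorm A * sNorm B :=
  stmt8_general A B UC S hUC hrC ε hε0 hsv i
end

section
/- Let A ∈ ℝ^{m×n} and S ∈ ℝ^{r×m} with rank(SA) = rank(A) = p, and suppose all singular values of S U_A lie in [√(1−ε), √(1+ε)] with 0 < ε < 1/2, where U_A is the left singular factor of A's compact SVD. Then ‖((SA)^+)^T A^T A (SA)^+ − U_{SA} U_{SA}^T‖₂ ≤ 2ε, where (SA)^+ is the Moore–Penrose pseudoinverse of SA and U_{SA} is the left singular factor of SA. -/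
open Matrix

/-!
Write `M = S U_A`, `G = Mᵀ M` and `T = U_Aᵀ A P`; the singular value hypothesis says exactly that
`(1 - ε) ≤ G ≤ (1 + ε)` in the Loewner order. As `U_A U_Aᵀ` fixes `A`, `Pᵀ Aᵀ A P = Tᵀ T`. Both
`U_{SA} U_{SA}ᵀ` and `S A P = M T` are the orthogonal projection onto the range of `S A`, so
`Tᵀ G T = (M T)ᵀ (M T) = S A P`. The matrix to bound is therefore `Tᵀ (1 - G) T`, which lies between
`-ε Tᵀ T` and `ε Tᵀ T`, while `(1 - ε) Tᵀ T ≤ Tᵀ G T ≤ 1` gives `Tᵀ T ≤ (1 - ε)⁻¹ ≤ 2`.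
-/

open scoped MatrixOrder ComplexOrder

lemma IsSelfAdjoint.eq_of_mul_eq {α : Type*} [Mul α] [StarMul α] {p q : α}
    (hp : IsSelfAdjoint p) (hq : IsSelfAdjoint q) (hpq : p * q = q) (hqp : q * p = p) : q = p := by
  rw [← hq.star_eq, ← hpq, star_mul, hp.star_eq, hq.star_eq, hqp]

namespace Matrix

section Projection

variable {l m n R : Type*} [Fintype m] [Fintype n] [CommSemiring R]

lemma mul_eq_of_range_le [Fintype l] {Q : Matrix m m R} {X : Matrix m n R} {Y : Matrix m l R}
    (hQY : Q * Y = Y) (hXY : LinearMap.range X.mulVecLin ≤ LinearMap.range Y.mulVecLin) :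
    Q * X = X := by
  refine ext_iff_mulVec.mpr fun v => ?_
  obtain ⟨w, hw : Y *ᵥ w = X *ᵥ v⟩ := hXY (LinearMap.mem_range_self X.mulVecLin v)
  rw [← mulVec_mulVec, ← hw, mulVec_mulVec, hQY]

lemma mul_conjTranspose_eq_of_range_eq [Fintype l] [StarRing R] [DecidableEq n]
    {U : Matrix m n R} {X : Matrix m l R} {P : Matrix l m R} (hU : Uᴴ * U = 1)
    (hUX : LinearMap.range U.mulVecLin = LinearMap.range X.mulVecLin)
    (hXP : IsSelfAdjoint (X * P)) (hXPX : X * P * X = X) : U * Uᴴ = X * P := by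
  have hXPU : X * P * U = U := mul_eq_of_range_le hXPX hUX.le
  have hUUX : U * Uᴴ * X = X :=
    mul_eq_of_range_le (by rw [Matrix.mul_assoc, hU, Matrix.mul_one]) hUX.ge
  refine hXP.eq_of_mul_eq (isHermitian_mul_conjTranspose_self U) ?_ ?_
  · rw [← Matrix.mul_assoc, hXPU]
  · rw [← Matrix.mul_assoc, hUUX]

lemma conjTranspose_mul_conjTranspose_mul_self_mul_eq [StarRing R] {Q : Matrix m m R}
    (hQ : IsStarProjection Q) {M : Matrix m n R} {T : Matrix n m R} (hMT : M * T = Q) :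
    Tᴴ * (Mᴴ * M) * T = Q := by
  calc Tᴴ * (Mᴴ * M) * T = (M * T)ᴴ * (M * T) := by
        simp only [conjTranspose_mul, Matrix.mul_assoc]
    _ = Q := by
        rw [hMT, ← star_eq_conjTranspose, hQ.isSelfAdjoint.star_eq, hQ.isIdempotentElem.eq]

end Projection

section LoewnerOrder

variable {m n 𝕜 : Type*} [Fintype m] [Fintype n] [RCLike 𝕜]

lemma conjTranspose_mul_mul_le {X Y : Matrix n n 𝕜} (h : X ≤ Y) (T : Matrix n m 𝕜) :
    Tᴴ * X * T ≤ Tᴴ * Y * T := by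
  rw [le_iff] at h ⊢
  simpa only [Matrix.mul_sub, Matrix.sub_mul] using h.conjTranspose_mul_mul_same T

omit [Fintype m] in
lemma conjTranspose_mul_smul_one_mul [DecidableEq n] (T : Matrix n m 𝕜) (a : ℝ) :
    Tᴴ * (a • 1 : Matrix n n 𝕜) * T = a • (Tᴴ * T) := by
  rw [Matrix.mul_smul, Matrix.mul_one, Matrix.smul_mul]

lemma conjTranspose_mul_self_le_inv_smul_one [DecidableEq m] [DecidableEq n] {G : Matrix n n 𝕜}
    {T : Matrix n m 𝕜} {a : ℝ} (ha : 0 < a) (hG : a • 1 ≤ G) (hTGT : Tᴴ * G * T ≤ 1) :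
    Tᴴ * T ≤ a⁻¹ • 1 := by
  have h : a • (Tᴴ * T) ≤ 1 := by
    simpa only [conjTranspose_mul_smul_one_mul] using (conjTranspose_mul_mul_le hG T).trans hTGT
  calc Tᴴ * T = a⁻¹ • a • (Tᴴ * T) := by rw [inv_smul_smul₀ ha.ne']
    _ ≤ a⁻¹ • 1 := smul_le_smul_of_nonneg_left h (inv_nonneg.mpr ha.le)

lemma conjTranspose_mul_self_sub_le [DecidableEq m] [DecidableEq n] {G : Matrix n n 𝕜}
    {T : Matrix n m 𝕜} {ε c : ℝ} (hε : 0 ≤ ε) (hG : (1 - ε) • 1 ≤ G) (hTT : Tᴴ * T ≤ c • 1) :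
    Tᴴ * T - Tᴴ * G * T ≤ (ε * c) • 1 := by
  have h1G : 1 - G ≤ ε • (1 : Matrix n n 𝕜) := by
    rw [sub_smul, one_smul] at hG
    rw [sub_le_comm]; exact hG
  calc Tᴴ * T - Tᴴ * G * T = Tᴴ * (1 - G) * T := by
        rw [Matrix.mul_sub, Matrix.sub_mul, Matrix.mul_one]
    _ ≤ ε • (Tᴴ * T) := by
        simpa only [conjTranspose_mul_smul_one_mul] using conjTranspose_mul_mul_le h1G T
    _ ≤ ε • c • 1 := smul_le_smul_of_nonneg_left hTT hε
    _ = (ε * c) • 1 := by rw [smul_smul]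

lemma neg_le_conjTranspose_mul_self_sub [DecidableEq m] [DecidableEq n] {G : Matrix n n 𝕜}
    {T : Matrix n m 𝕜} {ε c : ℝ} (hε : 0 ≤ ε) (hG : G ≤ (1 + ε) • 1) (hTT : Tᴴ * T ≤ c • 1) :
    -((ε * c) • 1) ≤ Tᴴ * T - Tᴴ * G * T := by
  have hG1 : G - 1 ≤ ε • (1 : Matrix n n 𝕜) := by
    rw [add_smul, one_smul] at hG
    rw [sub_le_iff_le_add']; exact hG
  rw [neg_le, neg_sub]
  calc Tᴴ * G * T - Tᴴ * T = Tᴴ * (G - 1) * T := by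
        rw [Matrix.mul_sub, Matrix.sub_mul, Matrix.mul_one]
    _ ≤ ε • (Tᴴ * T) := by
        simpa only [conjTranspose_mul_smul_one_mul] using conjTranspose_mul_mul_le hG1 T
    _ ≤ ε • c • 1 := smul_le_smul_of_nonneg_left hTT hε
    _ = (ε * c) • 1 := by rw [smul_smul]

lemma conjTranspose_mul_self_sub_mem_Icc [DecidableEq m] [DecidableEq n] {G : Matrix n n 𝕜}
    {T : Matrix n m 𝕜} {ε : ℝ} (hε0 : 0 ≤ ε) (hε1 : ε ≤ 1 / 2) (hlo : (1 - ε) • 1 ≤ G)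
    (hhi : G ≤ (1 + ε) • 1) (hTGT : Tᴴ * G * T ≤ 1) :
    Tᴴ * T - Tᴴ * G * T ∈ Set.Icc (-((2 * ε) • 1)) ((2 * ε) • 1) := by
  have hTT : Tᴴ * T ≤ (2 : ℝ) • 1 :=
    (conjTranspose_mul_self_le_inv_smul_one (by linarith) hlo hTGT).trans <|
      smul_le_smul_of_nonneg_right ((inv_le_comm₀ (by linarith) two_pos).mpr (by linarith))
        zero_le_one
  rw [mul_comm]
  exact ⟨neg_le_conjTranspose_mul_self_sub hε0 hhi hTT, conjTranspose_mul_self_sub_le hε0 hlo hTT⟩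

end LoewnerOrder

end Matrix

section SingularValues
variable {p q : ℕ}

lemma exists_svals_eq (X : Matrix (Fin p) (Fin q) ℝ) (j : Fin q) :
    ∃ i, svals X i = √((isHermitian_conjTranspose_mul_self X).eigenvalues j) :=
  ⟨((Tuple.sort (isHermitian_conjTranspose_mul_self X).eigenvalues).symm j).rev, by
    simp only [svals, Fin.rev_rev]
    exact congrArg (√·) (congrArg _ (Equiv.apply_symm_apply _ j))⟩

lemma smul_one_le_transpose_mul_self {X : Matrix (Fin p) (Fin q) ℝ} {a : ℝ}
    (h : ∀ i, √a ≤ svals X i) : a • 1 ≤ Xᵀ * X := by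
  have hX := isHermitian_conjTranspose_mul_self X
  rw [← Algebra.algebraMap_eq_smul_one, ← conjTranspose_eq_transpose_of_trivial,
    algebraMap_le_iff_le_spectrum (ha := hX), hX.spectrum_real_eq_range_eigenvalues]
  rintro _ ⟨j, rfl⟩
  obtain ⟨i, hi⟩ := exists_svals_eq X j
  have := h i
  rwa [hi, Real.sqrt_le_sqrt_iff (eigenvalues_conjTranspose_mul_self_nonneg X j)] at this

lemma transpose_mul_self_le_smul_one {X : Matrix (Fin p) (Fin q) ℝ} {b : ℝ} (hb : 0 ≤ b)
    (h : ∀ i, svals X i ≤ √b) : Xᵀ * X ≤ b • 1 := by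
  have hX := isHermitian_conjTranspose_mul_self X
  rw [← Algebra.algebraMap_eq_smul_one, ← conjTranspose_eq_transpose_of_trivial,
    le_algebraMap_iff_spectrum_le (ha := hX), hX.spectrum_real_eq_range_eigenvalues]
  rintro _ ⟨j, rfl⟩
  obtain ⟨i, hi⟩ := exists_svals_eq X j
  have := h i
  rwa [hi, Real.sqrt_le_sqrt_iff hb] at this

lemma sNorm_le_of_neg_le_of_le {D : Matrix (Fin p) (Fin p) ℝ} (hD : D.IsHermitian) {c : ℝ}
    (hc : 0 ≤ c) (hlo : -(c • 1) ≤ D) (hhi : D ≤ c • 1) : sNorm D ≤ c := by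
  have hD' : IsSelfAdjoint D := hD
  rw [← Algebra.algebraMap_eq_smul_one, le_algebraMap_iff_spectrum_le hD'] at hhi
  rw [← Algebra.algebraMap_eq_smul_one, ← map_neg, algebraMap_le_iff_le_spectrum hD'] at hlo
  have hspec : spectrum ℝ (Dᵀ * D) = (· ^ 2) '' spectrum ℝ D := by
    rw [← conjTranspose_eq_transpose_of_trivial, hD.eq, ← sq, ← cfc_pow_id (R := ℝ) D 2 hD',
      cfc_map_spectrum _ _ hD']
  have hDD : (Dᵀ * D).IsHermitian := isHermitian_conjTranspose_mul_self D
  refine Real.iSup_le (fun i => ?_) hc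
  obtain ⟨x, hx, hxeq⟩ : _ ∈ (· ^ 2) '' spectrum ℝ D :=
    hspec ▸ hDD.eigenvalues_mem_spectrum_real (Tuple.sort hDD.eigenvalues i.rev)
  change √(hDD.eigenvalues _) ≤ c
  rw [← hxeq, Real.sqrt_sq_eq_abs]
  exact abs_le.mpr ⟨hlo x hx, hhi x hx⟩

end SingularValues

theorem stmt11_general {m n r p : ℕ}
    (A : Matrix (Fin m) (Fin n) ℝ) (S : Matrix (Fin r) (Fin m) ℝ)
    (UA : Matrix (Fin m) (Fin p) ℝ)
    (hUA : UAᵀ * UA = 1)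
    (hrUA : LinearMap.range UA.mulVecLin = LinearMap.range A.mulVecLin)
    (USA : Matrix (Fin r) (Fin p) ℝ)
    (hUSA : USAᵀ * USA = 1)
    (hrUSA : LinearMap.range USA.mulVecLin = LinearMap.range (S * A).mulVecLin)
    -- P is the Moore–Penrose pseudoinverse of S * A
    (P : Matrix (Fin n) (Fin r) ℝ)
    (hP1 : S * A * P * (S * A) = S * A)
    (hP3 : (S * A * P).IsSymm)
    (ε : ℝ) (hε0 : 0 < ε) (hε1 : ε < 1 / 2)
    (hsv : ∀ i, Real.sqrt (1 - ε) ≤ svals (S * UA) i ∧ svals (S * UA) i ≤ Real.sqrt (1 + ε)) :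
    sNorm (Pᵀ * Aᵀ * A * P - USA * USAᵀ) ≤ 2 * ε := by
  obtain ⟨M, hM⟩ : ∃ M, M = S * UA := ⟨_, rfl⟩
  obtain ⟨T, hT⟩ : ∃ T, T = UAᵀ * A * P := ⟨_, rfl⟩
  rw [← hM] at hsv
  have hA : UA * UAᵀ * A = A :=
    mul_eq_of_range_le (by rw [Matrix.mul_assoc, hUA, Matrix.mul_one]) hrUA.ge
  have hQ : IsStarProjection (S * A * P) :=
    ⟨by rw [IsIdempotentElem, ← Matrix.mul_assoc, hP1], isHermitian_iff_isSymm.mpr hP3⟩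
  have hUSA_eq : USA * USAᵀ = S * A * P :=
    mul_conjTranspose_eq_of_range_eq hUSA hrUSA hQ.isSelfAdjoint (by rw [hP1])
  have hTT : Tᵀ * T = Pᵀ * Aᵀ * A * P := by
    simp only [hT, transpose_mul, transpose_transpose, Matrix.mul_assoc]
    rw [← Matrix.mul_assoc UA, ← Matrix.mul_assoc (UA * UAᵀ), hA]
  have hTGT : Tᵀ * (Mᵀ * M) * T = S * A * P := by
    refine conjTranspose_mul_conjTranspose_mul_self_mul_eq hQ ?_
    simp only [hM, hT, Matrix.mul_assoc]
    rw [← Matrix.mul_assoc UA, ← Matrix.mul_assoc (UA * UAᵀ), hA]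
  have hG_lo : (1 - ε) • 1 ≤ Mᵀ * M := smul_one_le_transpose_mul_self fun i => (hsv i).1
  have hG_hi : Mᵀ * M ≤ (1 + ε) • 1 :=
    transpose_mul_self_le_smul_one (by linarith) fun i => (hsv i).2
  have hbound : Tᵀ * T - Tᵀ * (Mᵀ * M) * T ∈ Set.Icc (-((2 * ε) • 1)) ((2 * ε) • 1) :=
    conjTranspose_mul_self_sub_mem_Icc hε0.le hε1.le hG_lo hG_hi (hTGT ▸ hQ.le_one)
  rw [hTT, hTGT] at hbound
  rw [hUSA_eq]
  have hD : (Pᵀ * Aᵀ * A * P - S * A * P).IsHermitian :=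
    hTT ▸ (isHermitian_conjTranspose_mul_self T).sub hQ.isSelfAdjoint
  exact sNorm_le_of_neg_le_of_le hD (by positivity) hbound.1 hbound.2

theorem stmt11 {m n r p : ℕ}
    (A : Matrix (Fin m) (Fin n) ℝ) (S : Matrix (Fin r) (Fin m) ℝ)
    (hrSA : (S * A).rank = p) (hrA : A.rank = p)
    (UA : Matrix (Fin m) (Fin p) ℝ)
    (hUA : UAᵀ * UA = 1)
    (hrUA : LinearMap.range UA.mulVecLin = LinearMap.range A.mulVecLin)
    (USA : Matrix (Fin r) (Fin p) ℝ)
    (hUSA : USAᵀ * USA = 1)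
    (hrUSA : LinearMap.range USA.mulVecLin = LinearMap.range (S * A).mulVecLin)
    -- P is the Moore–Penrose pseudoinverse of S * A
    (P : Matrix (Fin n) (Fin r) ℝ)
    (hP1 : S * A * P * (S * A) = S * A) (hP2 : P * (S * A) * P = P)
    (hP3 : (S * A * P).IsSymm) (hP4 : (P * (S * A)).IsSymm)
    (ε : ℝ) (hε0 : 0 < ε) (hε1 : ε < 1 / 2)
    (hsv : ∀ i, Real.sqrt (1 - ε) ≤ svals (S * UA) i ∧ svals (S * UA) i ≤ Real.sqrt (1 + ε)) :
    sNorm (Pᵀ * Aᵀ * A * P - USA * USAᵀ) ≤ 2 * ε :=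
  stmt11_general A S UA hUA hrUA USA hUSA hrUSA P hP1 hP3 ε hε0 hε1 hsv
end
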